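/- Let π : T^5 → T^5/Γ be the quotient map by the group Γ = ⟨α, β, γ⟩ ≅ (ℤ/2)³ of isometric involutions α(x) = (x₁, -x₂, -x₃, 1/2 - x₄, -x₅), β(x) = (-x₁, 1/2 - x₂, -x₃, x₄, -x₅), γ(x) = (-x₁, -x₂, 1/2 - x₃, -x₄, x₅). Then for any base point p₀ ∈ T^5 and any loop τ in T^5 based at p₀, the loop π ∘ τ in T^5/Γ is null-homotopic. -/

import Mathlib

abbrev T5 : Type := Fin 5 → AddCircle (1 : ℝ)

noncomputable def half : AddCircle (1 : ℝ) := ((1/2 : ℝ) : AddCircle (1 : ℝ))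

noncomputable def alphaMap (x : T5) : T5 := ![x 0, -x 1, -x 2, half - x 3, -x 4]
noncomputable def betaMap (x : T5) : T5 := ![-x 0, half - x 1, -x 2, x 3, -x 4]
noncomputable def gammaMap (x : T5) : T5 := ![-x 0, -x 1, half - x 2, -x 3, x 4]

/-- The orbit equivalence relation of `Γ = ⟨α, β, γ⟩` on `T⁵`: the equivalence
relation generated by `x ∼ α(x)`, `x ∼ β(x)`, `x ∼ γ(x)` (since `α, β, γ` are
commuting involutions this is exactly the orbit relation of `Γ`). -/
noncomputable def gammaSetoid : Setoid T5 :=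
  Relation.EqvGen.setoid (fun x y => y = alphaMap x ∨ y = betaMap x ∨ y = gammaMap x)

/-- The quotient `T⁵/Γ` with the quotient topology. -/
abbrev T5modGamma : Type := Quotient gammaSetoid

/-- The quotient map `π : T⁵ → T⁵/Γ`. -/
noncomputable def quotPi : T5 → T5modGamma := Quotient.mk gammaSetoid

theorem quotPi_continuous : Continuous quotPi := continuous_quotient_mk'

/-!
A loop in the torus is homotopic to the concatenation of its coordinate loops, because in a
topological group the pointwise sum of two loops is homotopic to their concatenation. So it
suffices that each map `u ↦ π (update x i u)` from the circle is null-homotopic. Moving the other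
coordinates is a homotopy, and after moving them to a suitable point some generator of `Γ` acts
on the `i`-th coordinate line as `u ↦ -u`; an even map on the circle factors through
`u ↦ ‖u‖` into the contractible line `ℝ`.
-/

namespace AddCircle

theorem coe_norm_eq_or_eq_neg {p : ℝ} (u : AddCircle p) :
    ((‖u‖ : ℝ) : AddCircle p) = u ∨ ((‖u‖ : ℝ) : AddCircle p) = -u := by
  induction u using QuotientAddGroup.induction_on with
  | H x =>
    have hperiod : ((round (p⁻¹ * x) * p : ℝ) : AddCircle p) = 0 := by
      rw [← zsmul_eq_mul, coe_zsmul, coe_period, smul_zero]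
    rw [norm_eq]
    rcases abs_choice (x - round (p⁻¹ * x) * p) with h | h <;> rw [h]
    · left; rw [coe_sub, hperiod, sub_zero]
    · right; rw [coe_neg, coe_sub, hperiod, sub_zero]

theorem nullhomotopic_of_even {p : ℝ} {X : Type*} [TopologicalSpace X] (f : C(AddCircle p, X))
    (hf : Function.Even f) : f.Nullhomotopic := by
  set g : C(ℝ, X) := f.comp ⟨((↑) : ℝ → AddCircle p), continuous_quotient_mk'⟩
  have hfactor : f = g.comp ⟨(‖·‖), continuous_norm⟩ := by
    ext u
    rcases coe_norm_eq_or_eq_neg u with h | h <;> simp [g, h, hf u]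
  rw [hfactor]
  exact ((id_nullhomotopic ℝ).comp_right g).comp_left _

end AddCircle

namespace Path

theorem homotopic_refl_of_nullhomotopic {X Y : Type*} [TopologicalSpace X]
    [TopologicalSpace Y] {f : C(Y, X)} (hf : f.Nullhomotopic) {y : Y} (γ : Path y y) {x : X}
    (ℓ : Path x x) (hℓ : ∀ t, ℓ t = f (γ t)) : ℓ.Homotopic (Path.refl x) := by
  obtain rfl : x = f y := by simpa using hℓ 0
  obtain rfl : ℓ = γ.map f.continuous := Path.ext (funext hℓ)
  obtain ⟨z, ⟨F⟩⟩ := hf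
  have hconst : γ.map (ContinuousMap.const Y z).continuous = Path.refl _ := by ext; rfl
  -- The null-homotopy conjugates `f ∘ γ` into the constant loop along the track `δ` of `y`.
  have hsquare := Homotopic.map_trans_evalAt F γ
  rw [hconst, ← Homotopic.Quotient.eq, Homotopic.Quotient.mk_trans, Homotopic.Quotient.mk_trans,
    Homotopic.Quotient.mk_refl, Homotopic.Quotient.trans_refl] at hsquare
  rw [← Homotopic.Quotient.eq, Homotopic.Quotient.mk_refl]
  set δ := Homotopic.Quotient.mk (F.evalAt y)
  calc
    _ = ((Homotopic.Quotient.mk (γ.map f.continuous)).trans δ).trans δ.symm := by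
      rw [Homotopic.Quotient.trans_assoc, Homotopic.Quotient.trans_symm,
        Homotopic.Quotient.trans_refl]
    _ = δ.trans δ.symm := by rw [hsquare]
    _ = _ := Homotopic.Quotient.trans_symm δ

section LoopSum

variable {G X : Type*} [AddCommGroup G] [TopologicalSpace G] [IsTopologicalAddGroup G]
  [TopologicalSpace X] {x : G}

def loopAdd (a b : Path x x) : Path x x where
  toFun t := a t + b t - x
  source' := by simp
  target' := by simp

theorem Homotopic.loopAdd {a a' b b' : Path x x} (ha : a.Homotopic a') (hb : b.Homotopic b') :
    (a.loopAdd b).Homotopic (a'.loopAdd b') := by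
  obtain ⟨F⟩ := ha
  obtain ⟨K⟩ := hb
  exact ⟨{ toFun := fun q => F q + K q - x
           map_zero_left := by simp [Path.loopAdd]
           map_one_left := by simp [Path.loopAdd]
           prop' := fun s t ht => by simp [Path.loopAdd, F.eq_fst s ht, K.eq_fst s ht] }⟩

theorem loopAdd_homotopic_trans (a b : Path x x) : (a.loopAdd b).Homotopic (a.trans b) := by
  have hsplit : (a.trans (Path.refl x)).loopAdd ((Path.refl x).trans b) = a.trans b := by
    ext t
    simp only [loopAdd, coe_mk_mk, trans_apply]
    split_ifs <;> simp
  rw [← hsplit]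
  exact (Homotopic.trans_refl a).symm.loopAdd (Homotopic.refl_trans b).symm

def loopSum {ι : Type*} (s : Finset ι) (ℓ : ι → Path x x) : Path x x where
  toFun t := x + ∑ i ∈ s, (ℓ i t - x)
  source' := by simp
  target' := by simp

theorem loopSum_insert {ι : Type*} [DecidableEq ι] {s : Finset ι} {a : ι} (ha : a ∉ s)
    (ℓ : ι → Path x x) : loopSum (insert a s) ℓ = (ℓ a).loopAdd (loopSum s ℓ) := by
  ext t
  simp only [loopSum, loopAdd, coe_mk_mk, Finset.sum_insert ha]
  abel

theorem map_loopSum_homotopic_refl {ι : Type*} {f : G → X} (hf : Continuous f) (s : Finset ι)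
    {ℓ : ι → Path x x} (hℓ : ∀ i ∈ s, ((ℓ i).map hf).Homotopic (Path.refl (f x))) :
    ((loopSum s ℓ).map hf).Homotopic (Path.refl (f x)) := by
  classical
  induction s using Finset.induction_on with
  | empty =>
    convert Homotopic.refl _
    ext t
    simp [loopSum]
  | insert a s ha ih =>
    rw [Finset.forall_mem_insert] at hℓ
    rw [loopSum_insert ha]
    refine ((loopAdd_homotopic_trans _ _).map ⟨f, hf⟩).trans ?_
    rw [← Path.refl_trans_refl, Path.map_trans]
    exact hℓ.1.hcomp (ih hℓ.2)

end LoopSum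

def coordLoop {ι : Type*} [DecidableEq ι] {Z : ι → Type*} [∀ i, TopologicalSpace (Z i)]
    {x : ∀ i, Z i} (γ : Path x x) (i : ι) : Path x x where
  toFun t := Function.update x i (γ t i)
  continuous_toFun := continuous_const.update i ((continuous_apply i).comp γ.continuous)
  source' := by simp
  target' := by simp

theorem loopSum_coordLoop {ι A : Type*} [Fintype ι] [DecidableEq ι] [AddCommGroup A]
    [TopologicalSpace A] [IsTopologicalAddGroup A] {x : ι → A} (γ : Path x x) :
    loopSum Finset.univ γ.coordLoop = γ := by
  ext t j
  have hsingle : ∀ i, Function.update x i (γ t i) j - x j =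
      (Pi.single i (γ t i - x i) : ι → A) j := by
    intro i
    by_cases h : j = i <;> simp [h]
  simp only [loopSum, coordLoop, coe_mk_mk, Pi.add_apply, Finset.sum_apply, Pi.sub_apply, hsingle,
    Finset.sum_pi_single, Finset.mem_univ, if_true, add_sub_cancel]

end Path

theorem ContinuousMap.homotopic_update {ι : Type*} [DecidableEq ι] {Z : ι → Type*}
    [∀ i, TopologicalSpace (Z i)] {x y : ∀ i, Z i} (γ : Path x y) (i : ι) :
    (⟨Function.update x i, continuous_const.update i continuous_id⟩ : C(Z i, ∀ j, Z j)).Homotopic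
      ⟨Function.update y i, continuous_const.update i continuous_id⟩ :=
  ⟨{ toFun := fun p => Function.update (γ p.1) i p.2
     continuous_toFun := (γ.continuous.comp continuous_fst).update i continuous_snd
     map_zero_left := by simp
     map_one_left := by simp }⟩

theorem quotPi_alphaMap (x : T5) : quotPi (alphaMap x) = quotPi x :=
  (Quotient.sound (Relation.EqvGen.rel x _ (Or.inl rfl))).symm

theorem quotPi_betaMap (x : T5) : quotPi (betaMap x) = quotPi x :=
  (Quotient.sound (Relation.EqvGen.rel x _ (Or.inr (Or.inl rfl)))).symm

theorem quotPi_gammaMap (x : T5) : quotPi (gammaMap x) = quotPi x :=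
  (Quotient.sound (Relation.EqvGen.rel x _ (Or.inr (Or.inr rfl)))).symm

theorem half_sub_quarter :
    half - ((4⁻¹ : ℝ) : AddCircle (1 : ℝ)) = ((4⁻¹ : ℝ) : AddCircle (1 : ℝ)) := by
  rw [half, ← AddCircle.coe_sub]; norm_num

/-- A generator of `Γ` that negates the `i`-th coordinate fixes the others once they are parked at
`0` (where it negates them) or at `1/4` (where it reflects them in `1/4`). -/
theorem exists_quotPi_update_neg (i : Fin 5) :
    ∃ q : T5, ∀ u, quotPi (Function.update q i (-u)) = quotPi (Function.update q i u) := by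
  fin_cases i
  · refine ⟨![0, (4⁻¹ : ℝ), 0, 0, 0], fun u => ?_⟩
    rw [← quotPi_betaMap]; congr 1
    ext j; fin_cases j <;> simp [betaMap, half_sub_quarter]
  · refine ⟨![0, 0, 0, (4⁻¹ : ℝ), 0], fun u => ?_⟩
    rw [← quotPi_alphaMap]; congr 1
    ext j; fin_cases j <;> simp [alphaMap, half_sub_quarter]
  · refine ⟨![0, 0, 0, (4⁻¹ : ℝ), 0], fun u => ?_⟩
    rw [← quotPi_alphaMap]; congr 1
    ext j; fin_cases j <;> simp [alphaMap, half_sub_quarter]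
  · refine ⟨![0, 0, (4⁻¹ : ℝ), 0, 0], fun u => ?_⟩
    rw [← quotPi_gammaMap]; congr 1
    ext j; fin_cases j <;> simp [gammaMap, half_sub_quarter]
  · refine ⟨![0, 0, 0, (4⁻¹ : ℝ), 0], fun u => ?_⟩
    rw [← quotPi_alphaMap]; congr 1
    ext j; fin_cases j <;> simp [alphaMap, half_sub_quarter]

theorem nullhomotopic_quotPi_update (x : T5) (i : Fin 5) :
    (⟨fun u => quotPi (Function.update x i u),
      quotPi_continuous.comp (continuous_const.update i continuous_id)⟩ :
      C(AddCircle (1 : ℝ), T5modGamma)).Nullhomotopic := by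
  obtain ⟨q, hq⟩ := exists_quotPi_update_neg i
  obtain ⟨z, hz⟩ := AddCircle.nullhomotopic_of_even
    ⟨fun u => quotPi (Function.update q i u),
      quotPi_continuous.comp (continuous_const.update i continuous_id)⟩ hq
  exact ⟨z, ((ContinuousMap.Homotopic.refl ⟨quotPi, quotPi_continuous⟩).comp
    (ContinuousMap.homotopic_update (PathConnectedSpace.somePath x q) i)).trans hz⟩

/-- For any base point `p₀ ∈ T⁵` and any loop `τ` in `T⁵` based at `p₀`, the loop
`π ∘ τ` in `T⁵/Γ` is null-homotopic (homotopic rel basepoint to the constant loop). -/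
theorem stmt8 (p₀ : T5) (τ : Path p₀ p₀) :
    (τ.map quotPi_continuous).Homotopic (Path.refl (quotPi p₀)) := by
  rw [← τ.loopSum_coordLoop]
  refine Path.map_loopSum_homotopic_refl quotPi_continuous _ fun i _ => ?_
  exact Path.homotopic_refl_of_nullhomotopic (nullhomotopic_quotPi_update p₀ i)
    (τ.map (continuous_apply i)) _ fun t => rfl
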